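/- With C := M_1 × ... × M_m in H^m and T_bold := P_{M_m^m} ⋯ P_{M_1^m}, for every k ≥ 1 one has ‖P_{C^⊥} T_bold^k P_D‖ ≤ max_{1≤i≤m} ‖P_{M_i^⊥} T^k‖ ≤ √m · ‖P_{C^⊥} T_bold^k P_D‖. -/

import Mathlib

noncomputable section
open Filter

variable {H : Type} [NormedAddCommGroup H] [InnerProductSpace ℝ H] [CompleteSpace H]

/-- The orthogonal projection onto a subspace `K`, viewed as an operator `H →L[ℝ] H`. -/
def projL (K : Submodule ℝ H) [K.HasOrthogonalProjection] : H →L[ℝ] H :=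
  K.subtypeL.comp K.orthogonalProjection

instance piLpCompleteSpace (m : ℕ) : CompleteSpace (PiLp 2 fun _ : Fin m => H) :=
  inferInstance

/-- `M₁ × ⋯ × Mₘ` as a submodule of the product Hilbert space `H^m = PiLp 2 (fun _ : Fin m => H)`.
(The paper equips `H^m` with the inner product `(1/m)∑⟨xᵢ,yᵢ⟩`; this is a positive scalar
multiple of the `PiLp 2` inner product, hence it induces the very same orthogonal projections,
orthogonal complements, and operator norms of maps `H^m → H^m`.) -/
def prodSubmodule {m : ℕ} (M : Fin m → Submodule ℝ H) :
    Submodule ℝ (PiLp 2 fun _ : Fin m => H) :=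
  Submodule.comap (WithLp.linearEquiv 2 ℝ (∀ _ : Fin m, H)).toLinearMap
    (Submodule.pi Set.univ M)

instance prodSubmoduleComplete {m : ℕ} (M : Fin m → Submodule ℝ H)
    [∀ i, CompleteSpace (M i)] : CompleteSpace (prodSubmodule M) := by
  have hcl : ∀ i, IsClosed ((M i : Set H)) := fun i =>
    (completeSpace_coe_iff_isComplete.mp inferInstance).isClosed
  have h : IsClosed ((prodSubmodule M : Set (PiLp 2 fun _ : Fin m => H))) := by
    have he : (prodSubmodule M : Set (PiLp 2 fun _ : Fin m => H)) =
        ⋂ i, (fun x : PiLp 2 (fun _ : Fin m => H) =>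
          (WithLp.equiv 2 (∀ _ : Fin m, H)) x i) ⁻¹' (M i : Set H) := by
      ext x
      simp [prodSubmodule, Submodule.mem_pi, Set.mem_iInter]
    rw [he]
    exact isClosed_iInter fun i =>
      (hcl i).preimage ((continuous_apply i).comp (PiLp.continuous_ofLp 2 _))
  exact h.completeSpace_coe

/-- The diagonal `{(x,…,x) : x ∈ H}` as a submodule of the product Hilbert space `H^m`. -/
def diagSubmodule (H : Type) [NormedAddCommGroup H] [InnerProductSpace ℝ H] (m : ℕ) :
    Submodule ℝ (PiLp 2 fun _ : Fin m => H) :=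
  LinearMap.range
    (((WithLp.linearEquiv 2 ℝ (∀ _ : Fin m, H)).symm.toLinearMap).comp
      (LinearMap.pi fun _ : Fin m => LinearMap.id))

instance diagSubmoduleComplete (m : ℕ) : CompleteSpace (diagSubmodule H m) := by
  have h : IsClosed ((diagSubmodule H m : Set (PiLp 2 fun _ : Fin m => H))) := by
    have he : (diagSubmodule H m : Set (PiLp 2 fun _ : Fin m => H)) =
        ⋂ (i : Fin m) (j : Fin m),
          {x : PiLp 2 (fun _ : Fin m => H) |
            (WithLp.equiv 2 (∀ _ : Fin m, H)) x i = (WithLp.equiv 2 (∀ _ : Fin m, H)) x j} := by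
      ext x
      simp only [Set.mem_iInter, Set.mem_setOf_eq, SetLike.mem_coe, diagSubmodule,
        LinearMap.mem_range, LinearMap.coe_comp, Function.comp_apply]
      constructor
      · rintro ⟨y, rfl⟩ i j
        rfl
      · intro h
        rcases Nat.eq_zero_or_pos m with hm | hm
        · subst hm
          refine ⟨0, ?_⟩
          apply (WithLp.equiv 2 (∀ _ : Fin 0, H)).injective
          funext j
          exact j.elim0
        · refine ⟨(WithLp.equiv 2 (∀ _ : Fin m, H)) x ⟨0, hm⟩, ?_⟩
          apply (WithLp.equiv 2 (∀ _ : Fin m, H)).injective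
          funext j
          exact h ⟨0, hm⟩ j
    rw [he]
    exact isClosed_iInter fun i => isClosed_iInter fun j =>
      isClosed_eq ((continuous_apply i).comp (PiLp.continuous_ofLp 2 _))
        ((continuous_apply j).comp (PiLp.continuous_ofLp 2 _))
  exact h.completeSpace_coe

/-- The product `P_{m-1} ∘ ⋯ ∘ P_0` of the operators `P i` (so `P 0` acts first);
for `P i = projL (M i)` this is the cyclic-projections operator `T = P_{M_m} ⋯ P_{M_1}`. -/
def cyclicProd {E : Type} [NormedAddCommGroup E] [NormedSpace ℝ E] {m : ℕ}
    (P : Fin m → (E →L[ℝ] E)) : E →L[ℝ] E :=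
  (List.ofFn P).foldl (fun acc p => p.comp acc) (ContinuousLinearMap.id ℝ E)


section Aux

open scoped RealInnerProductSpace

variable {m : ℕ}

lemma mem_prodSubmodule {M : Fin m → Submodule ℝ H} {x : PiLp 2 fun _ : Fin m => H} :
    x ∈ prodSubmodule M ↔ ∀ i, x i ∈ M i := by
  simp [prodSubmodule, Submodule.mem_pi]

lemma projL_orthogonal_apply {E : Type} [NormedAddCommGroup E] [InnerProductSpace ℝ E]
    (K : Submodule ℝ E) [K.HasOrthogonalProjection] [Kᗮ.HasOrthogonalProjection] (x : E) :
    projL Kᗮ x = x - projL K x :=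
  Submodule.starProjection_orthogonal_val (K := K) x

lemma projL_prodSubmodule_apply (M : Fin m → Submodule ℝ H) [∀ i, CompleteSpace (M i)]
    (x : PiLp 2 fun _ : Fin m => H) (j : Fin m) :
    projL (prodSubmodule M) x j = projL (M j) (x j) := by
  set y : PiLp 2 (fun _ : Fin m => H) := WithLp.toLp 2 fun i => projL (M i) (x i) with hy
  have h : (prodSubmodule M).starProjection x = y := by
    apply Submodule.eq_starProjection_of_mem_of_inner_eq_zero
    · exact mem_prodSubmodule.mpr fun i => Subtype.coe_prop _
    · intro w hw
      rw [PiLp.inner_apply]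
      refine Finset.sum_eq_zero fun i _ => ?_
      have h1 : x i - projL (M i) (x i) ∈ (M i)ᗮ :=
        Submodule.sub_starProjection_mem_orthogonal (K := M i) (x i)
      have h3 := mem_prodSubmodule.mp hw i
      have h2 : (x - y) i = x i - projL (M i) (x i) := rfl
      rw [h2]
      exact (Submodule.mem_orthogonal' _ _).mp h1 _ h3
  exact congrArg (fun z : PiLp 2 (fun _ : Fin m => H) => z j) h

lemma const_mem_diagSubmodule (h : H) :
    WithLp.toLp 2 (fun _ => h : ∀ _ : Fin m, H) ∈ diagSubmodule H m := ⟨h, rfl⟩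

lemma projL_diagSubmodule_apply (hm : 0 < m) (x : PiLp 2 fun _ : Fin m => H) (j : Fin m) :
    projL (diagSubmodule H m) x j = (m : ℝ)⁻¹ • ∑ i, x i := by
  have hm' : (m : ℝ) ≠ 0 := Nat.cast_ne_zero.mpr hm.ne'
  set y : PiLp 2 (fun _ : Fin m => H) := WithLp.toLp 2 fun _ => (m : ℝ)⁻¹ • ∑ i, x i with hy
  have h : (diagSubmodule H m).starProjection x = y := by
    apply Submodule.eq_starProjection_of_mem_of_inner_eq_zero
    · exact const_mem_diagSubmodule _
    · rintro w ⟨v, rfl⟩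
      rw [PiLp.inner_apply]
      have h2 : ∀ i : Fin m,
          (inner ℝ ((x - y) i)
            ((((WithLp.linearEquiv 2 ℝ (∀ _ : Fin m, H)).symm.toLinearMap).comp
              (LinearMap.pi fun _ : Fin m => LinearMap.id)) v i) : ℝ)
          = inner ℝ (x i - y i) v := fun i => rfl
      rw [Finset.sum_congr rfl fun i _ => h2 i, ← sum_inner]
      have h3 : (∑ i : Fin m, (x i - y i)) = 0 := by
        have h4 : ∀ i : Fin m, x i - y i = x i - (m : ℝ)⁻¹ • ∑ i', x i' := fun i => rfl
        rw [Finset.sum_congr rfl fun i _ => h4 i]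
        rw [Finset.sum_sub_distrib, Finset.sum_const, Finset.card_univ, Fintype.card_fin,
          ← Nat.cast_smul_eq_nsmul ℝ, smul_smul, mul_inv_cancel₀ hm', one_smul, sub_self]
      rw [h3, inner_zero_left]
  exact congrArg (fun z : PiLp 2 (fun _ : Fin m => H) => z j) h

lemma foldl_pointwise {m : ℕ} (L : List ((PiLp 2 fun _ : Fin m => H) →L[ℝ] PiLp 2 fun _ : Fin m => H))
    (l : List (H →L[ℝ] H))
    (hrel : List.Forall₂
      (fun (A : (PiLp 2 fun _ : Fin m => H) →L[ℝ] PiLp 2 fun _ : Fin m => H)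
        (B : H →L[ℝ] H) => ∀ x j, A x j = B (x j)) L l) :
    ∀ (A₀ : (PiLp 2 fun _ : Fin m => H) →L[ℝ] PiLp 2 fun _ : Fin m => H) (B₀ : H →L[ℝ] H),
      (∀ x j, A₀ x j = B₀ (x j)) →
      ∀ x j, (L.foldl (fun acc p => p.comp acc) A₀) x j
        = (l.foldl (fun acc p => p.comp acc) B₀) (x j) := by
  induction hrel with
  | nil => intro A₀ B₀ h; exact h
  | @cons a b L' l' hab _ ih =>
    intro A₀ B₀ h
    apply ih
    intro x j
    simp only [ContinuousLinearMap.comp_apply]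
    rw [hab (A₀ x) j, h x j]

lemma cyclicProd_pointwise {m : ℕ}
    (P : Fin m → ((PiLp 2 fun _ : Fin m => H) →L[ℝ] PiLp 2 fun _ : Fin m => H))
    (Q : Fin m → (H →L[ℝ] H)) (hPQ : ∀ i x j, P i x j = Q i (x j)) :
    ∀ x j, cyclicProd P x j = cyclicProd Q (x j) := by
  apply foldl_pointwise
  · rw [List.forall₂_iff_get]
    refine ⟨by simp, fun i h₁ h₂ => ?_⟩
    rw [List.get_ofFn, List.get_ofFn]
    exact hPQ _
  · intro x j; rfl

lemma pow_pointwise {m : ℕ}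
    (A : (PiLp 2 fun _ : Fin m => H) →L[ℝ] PiLp 2 fun _ : Fin m => H) (B : H →L[ℝ] H)
    (h : ∀ x j, A x j = B (x j)) (k : ℕ) :
    ∀ x j, (A ^ k) x j = (B ^ k) (x j) := by
  induction k with
  | zero => intro x j; rfl
  | succ n ih =>
    intro x j
    rw [pow_succ', pow_succ']
    simp only [ContinuousLinearMap.mul_apply]
    rw [h ((A ^ n) x) j, ih x j]

end Aux

/-- With `C = M₁ × ⋯ × Mₘ ⊆ H^m`, `𝐓 = P_{M_m^m} ⋯ P_{M_1^m}` and
`T = P_{M_m} ⋯ P_{M_1}`, for every `k ≥ 1`: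
`‖P_{C^⊥} 𝐓^k P_D‖ ≤ max_i ‖P_{Mᵢ^⊥} T^k‖ ≤ √m ⬝ ‖P_{C^⊥} 𝐓^k P_D‖`. -/
theorem norm_projC_perp_pow_comp_diag {m : ℕ} (hm : 0 < m) (M : Fin m → Submodule ℝ H)
    [∀ i, CompleteSpace (M i)] (k : ℕ) (hk : 1 ≤ k) :
    ‖(projL ((prodSubmodule M)ᗮ)).comp
        (((cyclicProd fun i : Fin m => projL (prodSubmodule fun _ : Fin m => M i)) ^ k).comp
          (projL (diagSubmodule H m)))‖ ≤
      (⨆ i : Fin m, ‖(projL (M i)ᗮ).comp ((cyclicProd fun i : Fin m => projL (M i)) ^ k)‖) ∧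
    (⨆ i : Fin m, ‖(projL (M i)ᗮ).comp ((cyclicProd fun i : Fin m => projL (M i)) ^ k)‖) ≤
      Real.sqrt m *
        ‖(projL ((prodSubmodule M)ᗮ)).comp
          (((cyclicProd fun i : Fin m => projL (prodSubmodule fun _ : Fin m => M i)) ^ k).comp
            (projL (diagSubmodule H m)))‖  := by
  haveI : Nonempty (Fin m) := ⟨⟨0, hm⟩⟩
  have hm' : (m : ℝ) ≠ 0 := Nat.cast_ne_zero.mpr hm.ne'
  set T : H →L[ℝ] H := cyclicProd fun i : Fin m => projL (M i) with hT
  set B : Fin m → (H →L[ℝ] H) := fun i => (projL (M i)ᗮ).comp (T ^ k) with hB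
  set TT := cyclicProd fun i : Fin m => projL (prodSubmodule fun _ : Fin m => M i) with hTT
  set A := (projL ((prodSubmodule M)ᗮ)).comp ((TT ^ k).comp (projL (diagSubmodule H m))) with hA
  have hTk : ∀ (x : PiLp 2 fun _ : Fin m => H) j, (TT ^ k) x j = (T ^ k) (x j) := by
    apply pow_pointwise
    apply cyclicProd_pointwise
    intro i x j
    exact projL_prodSubmodule_apply (fun _ => M i) x j
  have hAx : ∀ (x : PiLp 2 fun _ : Fin m => H) j,
      A x j = B j ((m : ℝ)⁻¹ • ∑ i, x i) := by
    intro x j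
    have e1 : A x j = (TT ^ k) (projL (diagSubmodule H m) x) j -
        projL (prodSubmodule M) ((TT ^ k) (projL (diagSubmodule H m) x)) j := by
      show projL (prodSubmodule M)ᗮ ((TT ^ k) (projL (diagSubmodule H m) x)) j = _
      rw [projL_orthogonal_apply]
      rfl
    rw [e1, projL_prodSubmodule_apply, hTk, projL_diagSubmodule_apply hm]
    show _ = projL (M j)ᗮ ((T ^ k) ((m : ℝ)⁻¹ • ∑ i, x i))
    rw [projL_orthogonal_apply]
  have hnormA : ∀ x : PiLp 2 fun _ : Fin m => H,
      ‖A x‖ ^ 2 = ∑ j, ‖B j ((m : ℝ)⁻¹ • ∑ i, x i)‖ ^ 2 := by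
    intro x
    rw [PiLp.norm_sq_eq_of_L2]
    exact Finset.sum_congr rfl fun j _ => by rw [hAx]
  have hnormD : ∀ x : PiLp 2 fun _ : Fin m => H,
      ‖projL (diagSubmodule H m) x‖ ^ 2 = (m : ℝ) * ‖(m : ℝ)⁻¹ • ∑ i, x i‖ ^ 2 := by
    intro x
    rw [PiLp.norm_sq_eq_of_L2]
    rw [Finset.sum_congr rfl fun j _ => by rw [projL_diagSubmodule_apply hm]]
    rw [Finset.sum_const, Finset.card_univ, Fintype.card_fin, nsmul_eq_mul]
  have hD_le : ∀ x : PiLp 2 fun _ : Fin m => H, ‖projL (diagSubmodule H m) x‖ ≤ ‖x‖ := by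
    intro x
    calc ‖projL (diagSubmodule H m) x‖
        = ‖(diagSubmodule H m).orthogonalProjection x‖ := rfl
      _ ≤ ‖(diagSubmodule H m).orthogonalProjection‖ * ‖x‖ :=
          ((diagSubmodule H m).orthogonalProjection).le_opNorm x
      _ ≤ 1 * ‖x‖ :=
          mul_le_mul_of_nonneg_right (Submodule.orthogonalProjection_norm_le _) (norm_nonneg _)
      _ = ‖x‖ := one_mul _
  have hS0 : (0 : ℝ) ≤ ⨆ i, ‖B i‖ := Real.iSup_nonneg fun i => norm_nonneg _
  have hSle : ∀ i, ‖B i‖ ≤ ⨆ i, ‖B i‖ := fun i =>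
    le_ciSup (f := fun i => ‖B i‖) (Set.Finite.bddAbove (Set.finite_range _)) i
  constructor
  · refine ContinuousLinearMap.opNorm_le_bound _ hS0 fun x => ?_
    set S := ⨆ i, ‖B i‖ with hSdef
    have h1 : ‖A x‖ ^ 2 ≤ S ^ 2 * ((m : ℝ) * ‖(m : ℝ)⁻¹ • ∑ i, x i‖ ^ 2) := by
      rw [hnormA]
      calc ∑ j, ‖B j ((m : ℝ)⁻¹ • ∑ i, x i)‖ ^ 2
          ≤ ∑ _j : Fin m, (S * ‖(m : ℝ)⁻¹ • ∑ i, x i‖) ^ 2 := by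
            refine Finset.sum_le_sum fun j _ => ?_
            refine pow_le_pow_left₀ (norm_nonneg _) ?_ 2
            exact le_trans ((B j).le_opNorm _)
              (mul_le_mul_of_nonneg_right (hSle j) (norm_nonneg _))
        _ = (m : ℝ) * (S * ‖(m : ℝ)⁻¹ • ∑ i, x i‖) ^ 2 := by
            rw [Finset.sum_const, Finset.card_univ, Fintype.card_fin, nsmul_eq_mul]
        _ = S ^ 2 * ((m : ℝ) * ‖(m : ℝ)⁻¹ • ∑ i, x i‖ ^ 2) := by ring
    have h2 : (m : ℝ) * ‖(m : ℝ)⁻¹ • ∑ i, x i‖ ^ 2 ≤ ‖x‖ ^ 2 := by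
      rw [← hnormD x]
      exact pow_le_pow_left₀ (norm_nonneg _) (hD_le x) 2
    have h3 : ‖A x‖ ^ 2 ≤ (S * ‖x‖) ^ 2 := by
      calc ‖A x‖ ^ 2 ≤ S ^ 2 * ((m : ℝ) * ‖(m : ℝ)⁻¹ • ∑ i, x i‖ ^ 2) := h1
        _ ≤ S ^ 2 * ‖x‖ ^ 2 := mul_le_mul_of_nonneg_left h2 (sq_nonneg _)
        _ = (S * ‖x‖) ^ 2 := by ring
    exact (pow_le_pow_iff_left₀ (norm_nonneg _)
      (mul_nonneg hS0 (norm_nonneg _)) two_ne_zero).mp h3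
  · refine ciSup_le fun i => ?_
    refine ContinuousLinearMap.opNorm_le_bound _ (by positivity) fun v => ?_
    set x : PiLp 2 fun _ : Fin m => H := WithLp.toLp 2 (fun _ => v : ∀ _ : Fin m, H) with hx
    have hc : (m : ℝ)⁻¹ • ∑ _i : Fin m, v = v := by
      rw [Finset.sum_const, Finset.card_univ, Fintype.card_fin,
        ← Nat.cast_smul_eq_nsmul ℝ, smul_smul, inv_mul_cancel₀ hm', one_smul]
    have hAxj : ∀ j, A x j = B j v := fun j => by rw [hAx x j]; rw [show (∑ i, x i) = ∑ _i : Fin m, v from rfl, hc]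
    have h2 : ‖A x‖ ^ 2 = ∑ j, ‖B j v‖ ^ 2 := by
      rw [PiLp.norm_sq_eq_of_L2]
      exact Finset.sum_congr rfl fun j _ => by rw [hAxj j]
    have h1 : ‖B i v‖ ^ 2 ≤ ∑ j, ‖B j v‖ ^ 2 :=
      Finset.single_le_sum (f := fun j => ‖B j v‖ ^ 2) (fun j _ => sq_nonneg _)
        (Finset.mem_univ i)
    have hxnorm : ‖x‖ ^ 2 = (m : ℝ) * ‖v‖ ^ 2 := by
      rw [PiLp.norm_sq_eq_of_L2]
      rw [show (∑ j, ‖x j‖ ^ 2) = ∑ _j : Fin m, ‖v‖ ^ 2 from rfl]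
      rw [Finset.sum_const, Finset.card_univ, Fintype.card_fin, nsmul_eq_mul]
    have h3 : ‖A x‖ ^ 2 ≤ ‖A‖ ^ 2 * ((m : ℝ) * ‖v‖ ^ 2) := by
      rw [← hxnorm, ← mul_pow]
      exact pow_le_pow_left₀ (norm_nonneg _) (A.le_opNorm x) 2
    have key : ‖B i v‖ ^ 2 ≤ (Real.sqrt m * ‖A‖ * ‖v‖) ^ 2 := by
      have he : (Real.sqrt m * ‖A‖ * ‖v‖) ^ 2 = ‖A‖ ^ 2 * ((m : ℝ) * ‖v‖ ^ 2) := by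
        rw [mul_pow, mul_pow, Real.sq_sqrt (by positivity : (0:ℝ) ≤ (m:ℝ))]
        ring
      rw [he]
      exact le_trans (h1.trans_eq h2.symm) h3
    exact (pow_le_pow_iff_left₀ (norm_nonneg _) (by positivity) two_ne_zero).mp key
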